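/- arXiv:math/0204270 — 10 statements merged into one kernel-verified Lean document; each statement's English description precedes it below -/
import Mathlib

section
/- For Zorn vector matrices over a commutative ring R, the determinant is multiplicative: det(AB) = det(A)·det(B) for all A, B in the Zorn algebra 𝔷(R). -/
/-- Zorn vector matrices `[[a, x],[y, b]]` with `a b : R` and `x y : R³`. -/
structure Zorn (R : Type*) where
  a : R
  x : Fin 3 → R
  y : Fin 3 → R
  b : R

namespace Zorn

variable {R : Type*} [CommRing R]

/-- Dot product on `R³`. -/
def dot (u v : Fin 3 → R) : R := u 0 * v 0 + u 1 * v 1 + u 2 * v 2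

/-- Cross product on `R³`. -/
def cross (u v : Fin 3 → R) : Fin 3 → R :=
  ![u 1 * v 2 - u 2 * v 1, u 2 * v 0 - u 0 * v 2, u 0 * v 1 - u 1 * v 0]

/-- The Zorn vector matrix product. -/
def mul (A B : Zorn R) : Zorn R where
  a := A.a * B.a + dot A.x B.y
  x := fun i => A.a * B.x i + B.b * A.x i - cross A.y B.y i
  y := fun i => B.a * A.y i + A.b * B.y i + cross A.x B.x i
  b := A.b * B.b + dot A.y B.x

/-- The determinant of a Zorn vector matrix. -/
def det (A : Zorn R) : R := A.a * A.b - dot A.x A.y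

/-- The identity Zorn vector matrix. -/
def one : Zorn R := ⟨1, 0, 0, 1⟩

end Zorn

/-- the determinant on the Zorn algebra over a commutative ring is
multiplicative: `det (A * B) = det A * det B`. -/
theorem zorn_det_mul {R : Type*} [CommRing R] (A B : Zorn R) :
    (A.mul B).det = A.det * B.det := by
  simp only [Zorn.mul, Zorn.det, Zorn.dot, Zorn.cross]
  simp [Matrix.cons_val_zero, Matrix.cons_val_one, Matrix.head_cons]
  ring
end

section
/- The Zorn algebra 𝔷(R) over a commutative ring R is an alternative ring: for all A, B in 𝔷(R), A·(A·B) = (A·A)·B and (A·B)·B = A·(B·B). -/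
lemma cross0 {R : Type*} [CommRing R] (u v : Fin 3 → R) :
    Zorn.cross u v 0 = u 1 * v 2 - u 2 * v 1 := rfl
lemma cross1 {R : Type*} [CommRing R] (u v : Fin 3 → R) :
    Zorn.cross u v 1 = u 2 * v 0 - u 0 * v 2 := rfl
lemma cross2 {R : Type*} [CommRing R] (u v : Fin 3 → R) :
    Zorn.cross u v 2 = u 0 * v 1 - u 1 * v 0 := rfl

/-- the Zorn algebra over a commutative ring is alternative:
`A(AB) = (AA)B` and `(AB)B = A(BB)`. -/
theorem zorn_alternative {R : Type*} [CommRing R] (A B : Zorn R) :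
    A.mul (A.mul B) = (A.mul A).mul B ∧ (A.mul B).mul B = A.mul (B.mul B) := by
  constructor <;>
  · simp only [Zorn.mul, Zorn.dot, Zorn.mk.injEq]
    refine ⟨?_, funext fun i => ?_, funext fun i => ?_, ?_⟩
    · simp only [cross0, cross1, cross2]; ring
    · fin_cases i <;> · simp only [Fin.zero_eta, Fin.mk_one, Fin.reduceFinMk, cross0, cross1, cross2]; ring
    · fin_cases i <;> · simp only [Fin.zero_eta, Fin.mk_one, Fin.reduceFinMk, cross0, cross1, cross2]; ring
    · simp only [cross0, cross1, cross2]; ring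
end

section
/- The set SLL(2,R) = {A ∈ 𝔷(R) | det A = 1} is closed under the Zorn multiplication, contains the identity, every element has a two-sided inverse in SLL(2,R), and it satisfies the Moufang identity ((A·B)·A)·C = A·(B·(A·C)) for all A, B, C ∈ SLL(2,R). -/
namespace Zorn
variable {R : Type*} [CommRing R]

lemma cross0 (u v : Fin 3 → R) : cross u v 0 = u 1 * v 2 - u 2 * v 1 := rfl
lemma cross1 (u v : Fin 3 → R) : cross u v 1 = u 2 * v 0 - u 0 * v 2 := rfl
lemma cross2 (u v : Fin 3 → R) : cross u v 2 = u 0 * v 1 - u 1 * v 0 := rfl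

lemma ext' {A B : Zorn R} (ha : A.a = B.a) (hx0 : A.x 0 = B.x 0)
    (hx1 : A.x 1 = B.x 1) (hx2 : A.x 2 = B.x 2) (hy0 : A.y 0 = B.y 0)
    (hy1 : A.y 1 = B.y 1) (hy2 : A.y 2 = B.y 2) (hb : A.b = B.b) : A = B := by
  cases A; cases B
  simp only [Zorn.mk.injEq] at *
  refine ⟨ha, ?_, ?_, hb⟩ <;> funext i <;> fin_cases i <;> assumption

lemma det_mul (A B : Zorn R) : (A.mul B).det = A.det * B.det := by
  simp only [det, mul, dot, cross0, cross1, cross2]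
  ring

end Zorn

/-- `SLL(2,R) = {A | det A = 1}` is closed under multiplication,
contains the identity, every element has a two-sided inverse of determinant 1,
and the Moufang identity `((AB)A)C = A(B(AC))` holds on it. -/
theorem SLL_is_Moufang_loop (R : Type*) [CommRing R] :
    (∀ A B : Zorn R, A.det = 1 → B.det = 1 → (A.mul B).det = 1) ∧
    (Zorn.one : Zorn R).det = 1 ∧
    (∀ A : Zorn R, A.det = 1 →
      ∃ B : Zorn R, B.det = 1 ∧ A.mul B = Zorn.one ∧ B.mul A = Zorn.one) ∧
    (∀ A B C : Zorn R, A.det = 1 → B.det = 1 → C.det = 1 →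
      ((A.mul B).mul A).mul C = A.mul (B.mul (A.mul C))) := by
  refine ⟨fun A B hA hB => by rw [Zorn.det_mul, hA, hB, mul_one],
    by simp [Zorn.det, Zorn.one, Zorn.dot],
    fun A hA => ⟨⟨A.b, fun i => -A.x i, fun i => -A.y i, A.a⟩, ?_, ?_, ?_⟩,
    fun A B C _ _ _ => ?_⟩
  · simp only [Zorn.det, Zorn.dot] at hA ⊢; linear_combination hA
  · simp only [Zorn.det, Zorn.dot] at hA
    apply Zorn.ext' <;>
      simp only [Zorn.mul, Zorn.one, Zorn.dot, Zorn.cross0, Zorn.cross1, Zorn.cross2,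
        Pi.zero_apply] <;>
      first
      | linear_combination hA
      | linear_combination -hA
      | ring
  · simp only [Zorn.det, Zorn.dot] at hA
    apply Zorn.ext' <;>
      simp only [Zorn.mul, Zorn.one, Zorn.dot, Zorn.cross0, Zorn.cross1, Zorn.cross2,
        Pi.zero_apply] <;>
      first
      | linear_combination hA
      | linear_combination -hA
      | ring
  · apply Zorn.ext' <;>
      simp only [Zorn.mul, Zorn.dot, Zorn.cross0, Zorn.cross1, Zorn.cross2] <;> ring
end

section
/- Let R be a commutative ring and A = [[1,(v₁,v₂,v₃)],[(u₁,u₂,u₃),b]] an element of the Zorn algebra with det A = 1. Then A = ((C·A₃)·A₂)·A₁ where Aⱼ = [[1, vⱼeⱼ],[0,1]] for j = 1,2,3 and C = [[1,0],[(u₁+v₃v₂, u₂−v₃v₁, u₃+v₂v₁),1]], with e₁,e₂,e₃ the standard basis of R³. -/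
/-- if `A = [[1,(v₁,v₂,v₃)],[(u₁,u₂,u₃),b]]` has determinant 1,
then `A = ((C·A₃)·A₂)·A₁` where `Aⱼ = [[1, vⱼeⱼ],[0,1]]` and
`C = [[1,0],[(u₁+v₃v₂, u₂−v₃v₁, u₃+v₂v₁),1]]`. -/
theorem zorn_factorization {R : Type*} [CommRing R] (v u : Fin 3 → R) (b : R)
    (hdet : (⟨1, v, u, b⟩ : Zorn R).det = 1) :
    (⟨1, v, u, b⟩ : Zorn R) =
      Zorn.mul
        (Zorn.mul
          (Zorn.mul
            (⟨1, 0, ![u 0 + v 2 * v 1, u 1 - v 2 * v 0, u 2 + v 1 * v 0], 1⟩ : Zorn R)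
            ⟨1, ![0, 0, v 2], 0, 1⟩)
          ⟨1, ![0, v 1, 0], 0, 1⟩)
        ⟨1, ![v 0, 0, 0], 0, 1⟩ := by
  have hb : b = 1 + Zorn.dot v u := by
    simp [Zorn.det] at hdet; linear_combination hdet
  simp only [Zorn.mul, Zorn.dot, Zorn.cross, Zorn.mk.injEq]
  refine ⟨by simp, ?_, ?_, by simp [hb, Zorn.dot]; ring⟩ <;>
    funext i <;> fin_cases i <;> simp [hb, Zorn.dot] <;> ring
end

section
/- Let R be a commutative semilocal Noetherian ring and x = (x₁,…,xₘ) ∈ Rᵐ a unimodular element (i.e., there is an R-linear form L: Rᵐ → R with L(x) = 1). Then there exist y₂,…,yₘ ∈ R such that x₁ + y₂x₂ + ⋯ + yₘxₘ is invertible in R. -/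
/-- in a commutative semilocal Noetherian ring `R` (finitely many
maximal ideals), for a unimodular `x = (x₁,…,x_{m+1}) ∈ R^{m+1}` (there is a
linear form `L` with `L x = 1`) there are `y₂,…,y_{m+1}` making
`x₁ + y₂x₂ + ⋯ + y_{m+1}x_{m+1}` a unit. -/
theorem unimodular_semilocal {R : Type*} [CommRing R] [IsNoetherianRing R]
    (hsemilocal : {I : Ideal R | I.IsMaximal}.Finite)
    (m : ℕ) (x : Fin (m + 1) → R)
    (hx : ∃ L : (Fin (m + 1) → R) →ₗ[R] R, L x = 1) :
    ∃ y : Fin m → R, IsUnit (x 0 + ∑ i : Fin m, y i * x i.succ) := by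
  obtain ⟨L, hL⟩ := hx
  -- unimodularity: ∑ x i * c i = 1
  have hsum : ∑ i, x i * (L fun j => if i = j then 1 else 0) = 1 := by
    conv_rhs => rw [← hL, LinearMap.pi_apply_eq_sum_univ L x]
    simp [smul_eq_mul]
  -- for each maximal ideal M there is a suitable local choice
  have key : ∀ M : Ideal R, M.IsMaximal →
      ∃ z : Fin m → R, x 0 + ∑ i : Fin m, z i * x i.succ ∉ M := by
    intro M hM
    by_cases h0 : x 0 ∈ M
    · -- some x i ∉ M with i ≠ 0
      have : ∃ i : Fin (m + 1), x i ∉ M := by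
        by_contra h
        push_neg at h
        have : (1 : R) ∈ M := by
          rw [← hsum]; exact Ideal.sum_mem _ fun i _ => M.mul_mem_right _ (h i)
        exact hM.ne_top (M.eq_top_of_isUnit_mem this isUnit_one)
      obtain ⟨i, hi⟩ := this
      have hine : i ≠ 0 := by rintro rfl; exact hi h0
      obtain ⟨j, rfl⟩ : ∃ j : Fin m, i = j.succ := ⟨i.pred hine, (Fin.succ_pred i hine).symm⟩
      refine ⟨fun k => if k = j then 1 else 0, fun hmem => hi ?_⟩
      have hs : ∑ i : Fin m, (if i = j then (1:R) else 0) * x i.succ = x j.succ := by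
        rw [Finset.sum_eq_single j]
        · simp
        · intro b _ hb; simp [hb]
        · simp
      rw [hs] at hmem
      have := M.sub_mem hmem h0
      simpa using this
    · exact ⟨0, by simpa using h0⟩
  choose z hz using key
  -- CRT: index by the finite set of maximal ideals
  set ι := {I // I ∈ hsemilocal.toFinset}
  have hcop : Pairwise fun (i j : ι) => IsCoprime (i.1 : Ideal R) j.1 := by
    intro i j hij
    have hi : (i.1 : Ideal R).IsMaximal := by
      have := i.2; rw [Set.Finite.mem_toFinset] at this; exact this
    have hj : (j.1 : Ideal R).IsMaximal := by
      have := j.2; rw [Set.Finite.mem_toFinset] at this; exact this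
    exact Ideal.isCoprime_iff_sup_eq.mpr
      (Ideal.IsMaximal.coprime_of_ne hi hj (fun h => hij (Subtype.ext h)))
  -- choose y componentwise
  have crt : ∀ k : Fin m, ∃ r : R, ∀ i : ι,
      r - z i.1 (by have := i.2; rwa [Set.Finite.mem_toFinset] at this) k ∈ (i.1 : Ideal R) :=
    fun k => Ideal.exists_forall_sub_mem_ideal hcop _
  choose y hy using crt
  refine ⟨y, ?_⟩
  by_contra hunit
  obtain ⟨M, hM, hmem⟩ := exists_max_ideal_of_mem_nonunits (mem_nonunits_iff.mpr hunit)
  have hMs : M ∈ hsemilocal.toFinset := (Set.Finite.mem_toFinset _).mpr hM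
  set i : ι := ⟨M, hMs⟩
  have hMmax : (i.1 : Ideal R).IsMaximal := by
    have := i.2; rwa [Set.Finite.mem_toFinset] at this
  apply hz M hMmax
  have hdiff : (x 0 + ∑ k : Fin m, y k * x k.succ)
      - (x 0 + ∑ k : Fin m, z M hMmax k * x k.succ) ∈ M := by
    rw [add_sub_add_left_eq_sub, ← Finset.sum_sub_distrib]
    refine Ideal.sum_mem _ fun k _ => ?_
    rw [← sub_mul]
    exact M.mul_mem_right _ (hy k i)
  have heq : x 0 + ∑ k : Fin m, z M hMmax k * x k.succ
      = (x 0 + ∑ k : Fin m, y k * x k.succ)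
        - ((x 0 + ∑ k : Fin m, y k * x k.succ)
          - (x 0 + ∑ k : Fin m, z M hMmax k * x k.succ)) := (sub_sub_cancel _ _).symm
  rw [heq]
  exact M.sub_mem hmem hdiff
end

section
/- Let L be a loop with the inverse property and H a subloop of L. Then the following are equivalent: (1) for all x, y ∈ L, Hx ∩ Hy ≠ ∅ implies Hx = Hy; (2) H(hx) = Hx for all x ∈ L and h ∈ H. -/
/-- A loop (quasigroup with identity) with the inverse property. -/
structure IPLoop (L : Type*) where
  mul : L → L → L
  one : L
  inv : L → L
  one_mul : ∀ x, mul one x = x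
  mul_one : ∀ x, mul x one = x
  mul_left_bij : ∀ a, Function.Bijective (mul a)
  mul_right_bij : ∀ a, Function.Bijective (fun x => mul x a)
  inv_mul_cancel : ∀ x y, mul (inv x) (mul x y) = y
  mul_inv_cancel : ∀ x y, mul (mul y x) (inv x) = y

namespace IPLoop

variable {L : Type*}

/-- `H` is a subloop: contains the identity and is closed under
multiplication and inverses. -/
def IsSubloop (G : IPLoop L) (H : Set L) : Prop :=
  G.one ∈ H ∧ (∀ a ∈ H, ∀ b ∈ H, G.mul a b ∈ H) ∧ (∀ a ∈ H, G.inv a ∈ H)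

/-- The right coset `Hx = {h * x : h ∈ H}`. -/
def rcoset (G : IPLoop L) (H : Set L) (x : L) : Set L :=
  (fun h => G.mul h x) '' H

end IPLoop

/-- for a subloop `H` of an inverse-property loop `L`, the
conditions (1) intersecting right cosets of `H` are equal, and
(2) `H(hx) = Hx` for all `x ∈ L`, `h ∈ H`, are equivalent. -/
theorem lagrange_property_equiv {L : Type*} (G : IPLoop L) (H : Set L)
    (hH : IPLoop.IsSubloop G H) :
    (∀ x y : L, (IPLoop.rcoset G H x ∩ IPLoop.rcoset G H y).Nonempty →
        IPLoop.rcoset G H x = IPLoop.rcoset G H y) ↔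
    (∀ x : L, ∀ h ∈ H, IPLoop.rcoset G H (G.mul h x) = IPLoop.rcoset G H x) := by
  obtain ⟨h1, hmul, hinv⟩ := hH
  constructor
  · intro h1c x h hh
    apply h1c
    refine ⟨G.mul h x, ⟨G.one, h1, G.one_mul _⟩, ⟨h, hh, rfl⟩⟩
  · intro h2 x y ⟨z, ⟨a, ha, haz⟩, ⟨b, hb, hbz⟩⟩
    have hx := h2 x a ha
    have hy := h2 y b hb
    simp only [] at haz hbz
    rw [haz] at hx
    rw [hbz] at hy
    rw [← hx, ← hy]
end

section
/- Let L be a loop with the inverse property, H a subloop of L such that L has the Lagrange property relative to H, and F any subloop of L. Then F has the Lagrange property relative to H ∩ F; moreover, if H has finite index in L, then H ∩ F has finite index in F, with [F : H∩F] ≤ [L : H]. -/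
/-- if `L` has the Lagrange property relative to a subloop `H`
and `F` is any subloop, then `F` has the Lagrange property relative to
`H ∩ F`; moreover if `H` has finite index in `L` then `H ∩ F` has finite
index in `F`, with `[F : H ∩ F] ≤ [L : H]`. -/
theorem lagrange_relative_intersection {L : Type*} (G : IPLoop L) (H F : Set L)
    (hH : IPLoop.IsSubloop G H) (hF : IPLoop.IsSubloop G F)
    (hLag : ∀ x : L, ∀ h ∈ H, IPLoop.rcoset G H (G.mul h x) = IPLoop.rcoset G H x) :
    (∀ x ∈ F, ∀ h ∈ H ∩ F,
        IPLoop.rcoset G (H ∩ F) (G.mul h x) = IPLoop.rcoset G (H ∩ F) x) ∧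
    ({S : Set L | ∃ x : L, S = IPLoop.rcoset G H x}.Finite →
      {S : Set L | ∃ x ∈ F, S = IPLoop.rcoset G (H ∩ F) x}.Finite ∧
      {S : Set L | ∃ x ∈ F, S = IPLoop.rcoset G (H ∩ F) x}.ncard ≤
        {S : Set L | ∃ x : L, S = IPLoop.rcoset G H x}.ncard) := by

  classical
  obtain ⟨h1H, hmulH, hinvH⟩ := hH
  obtain ⟨h1F, hmulF, hinvF⟩ := hF
  have key : ∀ x ∈ F, IPLoop.rcoset G (H ∩ F) x = IPLoop.rcoset G H x ∩ F := by
    intro x hx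
    ext y
    constructor
    · rintro ⟨h, ⟨hh, hhF⟩, rfl⟩
      exact ⟨⟨h, hh, rfl⟩, hmulF h hhF x hx⟩
    · rintro ⟨⟨h, hh, rfl⟩, hyF⟩
      refine ⟨h, ⟨hh, ?_⟩, rfl⟩
      have : h = G.mul (G.mul h x) (G.inv x) := (G.mul_inv_cancel x h).symm
      rw [this]
      exact hmulF _ hyF _ (hinvF x hx)
  have mem_coset : ∀ x y, y ∈ IPLoop.rcoset G H x →
      IPLoop.rcoset G H y = IPLoop.rcoset G H x := by
    rintro x y ⟨h, hh, rfl⟩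
    exact hLag x h hh
  have self_mem : ∀ x, x ∈ IPLoop.rcoset G H x := fun x => ⟨G.one, h1H, G.one_mul x⟩
  constructor
  · rintro x hx h ⟨hhH, hhF⟩
    rw [key _ (hmulF h hhF x hx), key _ hx, hLag x h hhH]
  · intro hfin
    set A := {S : Set L | ∃ x ∈ F, S = IPLoop.rcoset G (H ∩ F) x} with hA
    set B := {S : Set L | ∃ x : L, S = IPLoop.rcoset G H x} with hB
    set g : Set L → Set L := fun S => ⋃ y ∈ S, IPLoop.rcoset G H y with hg
    have hgval : ∀ x ∈ F, g (IPLoop.rcoset G (H ∩ F) x) = IPLoop.rcoset G H x := by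
      intro x hx
      apply Set.eq_of_subset_of_subset
      · intro z hz
        simp only [g, Set.mem_iUnion] at hz
        obtain ⟨y, hy, hz⟩ := hz
        rw [key _ hx] at hy
        rwa [mem_coset x y hy.1] at hz
      · intro z hz
        simp only [g, Set.mem_iUnion]
        refine ⟨x, ?_, hz⟩
        rw [key _ hx]
        exact ⟨self_mem x, hx⟩
    have himg : g '' A ⊆ B := by
      rintro _ ⟨S, ⟨x, hx, rfl⟩, rfl⟩
      exact ⟨x, (hgval x hx)⟩
    have hinj : Set.InjOn g A := by
      rintro S ⟨x, hx, rfl⟩ S' ⟨y, hy, rfl⟩ hxy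
      rw [hgval x hx, hgval y hy] at hxy
      rw [key _ hx, key _ hy, hxy]
    have hAfin : A.Finite := Set.Finite.of_finite_image (hfin.subset himg) hinj
    refine ⟨hAfin, ?_⟩
    calc A.ncard = (g '' A).ncard := (Set.ncard_image_of_injOn hinj).symm
      _ ≤ B.ncard := Set.ncard_le_ncard himg hfin
end

section
/- For every prime p and every k ≥ 1, the number of elements A = [[a,u],[v,b]] of the Zorn algebra over ℤ/p^kℤ with det A = ab − v·u = 1 equals p^{7k}(1 − p^{−4}), i.e., p^{7k} − p^{7k−4}. -/
section Aux

variable {R : Type*} [CommRing R]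

/-- Units are equivalent to the subtype of elements satisfying `IsUnit`. -/
noncomputable def myUnitsEquiv {M : Type*} [Monoid M] : Mˣ ≃ {a : M // IsUnit a} where
  toFun u := ⟨u, u.isUnit⟩
  invFun a := a.2.unit
  left_inv u := Units.ext rfl
  right_inv a := Subtype.ext a.2.unit_spec

/-- Zorn matrices of determinant 1 correspond to pairs of 4-vectors with dot product 1. -/
noncomputable def zornEquivPairs :
    {A : Zorn R // A.det = 1} ≃
      {w : (Fin 4 → R) × (Fin 4 → R) // ∑ i, w.1 i * w.2 i = 1} where
  toFun A := ⟨(![A.1.a, A.1.x 0, A.1.x 1, A.1.x 2], ![A.1.b, -A.1.y 0, -A.1.y 1, -A.1.y 2]), by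
    have h := A.2
    simp only [Zorn.det, Zorn.dot] at h
    simp [Fin.sum_univ_four]
    linear_combination h⟩
  invFun w := ⟨⟨w.1.1 0, ![w.1.1 1, w.1.1 2, w.1.1 3], ![-w.1.2 1, -w.1.2 2, -w.1.2 3], w.1.2 0⟩, by
    have h := w.2
    rw [Fin.sum_univ_four] at h
    simp only [Zorn.det, Zorn.dot]
    simp
    linear_combination h⟩
  left_inv := by
    rintro ⟨⟨a, x, y, b⟩, h⟩
    apply Subtype.ext
    simp only [Zorn.mk.injEq]
    refine ⟨by simp, ?_, ?_, by simp⟩ <;> (funext i; fin_cases i <;> simp)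
  right_inv := by
    rintro ⟨⟨x, y⟩, h⟩
    apply Subtype.ext
    simp only [Prod.mk.injEq]
    constructor <;> (funext i; fin_cases i <;> simp)

theorem count_fiber_unit0 (c : Fin 4 → R) (hc : IsUnit (c 0)) :
    Nat.card {y : Fin 4 → R // ∑ i, c i * y i = 1} = Nat.card (Fin 3 → R) := by
  obtain ⟨u, hu⟩ := hc
  apply Nat.card_congr
  refine
    { toFun := fun y i => y.1 i.succ
      invFun := fun z => ⟨Fin.cons ((↑u⁻¹ : R) * (1 - ∑ i : Fin 3, c i.succ * z i)) z, ?_⟩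
      left_inv := ?_
      right_inv := ?_ }
  · rw [Fin.sum_univ_succ]
    simp only [Fin.cons_zero, Fin.cons_succ]
    rw [← hu, Units.mul_inv_cancel_left]
    ring
  · rintro ⟨y, hy⟩
    apply Subtype.ext
    refine funext (Fin.cases ?_ ?_)
    · rw [Fin.sum_univ_succ] at hy
      simp only [Fin.cons_zero]
      have : (1 : R) - ∑ i : Fin 3, c i.succ * y i.succ = c 0 * y 0 := by linear_combination -1 * hy
      rw [this, ← hu, Units.inv_mul_cancel_left]
    · intro i; simp [Fin.cons_succ]
  · intro z; funext i; simp [Fin.cons_succ]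

theorem count_fiber_unit (c : Fin 4 → R) (hc : ∃ j, IsUnit (c j)) :
    Nat.card {y : Fin 4 → R // ∑ i, c i * y i = 1} = Nat.card (Fin 3 → R) := by
  obtain ⟨j, hj⟩ := hc
  set σ : Equiv.Perm (Fin 4) := Equiv.swap 0 j with hσ
  have key : Nat.card {y : Fin 4 → R // ∑ i, c i * y i = 1} =
      Nat.card {y : Fin 4 → R // ∑ i, c (σ i) * y i = 1} := by
    apply Nat.card_congr
    refine
      { toFun := fun y => ⟨y.1 ∘ σ, ?_⟩
        invFun := fun y => ⟨y.1 ∘ σ, ?_⟩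
        left_inv := ?_
        right_inv := ?_ }
    · show ∑ i, c (σ i) * y.1 (σ i) = 1
      rw [Equiv.sum_comp σ (fun i => c i * y.1 i)]
      exact y.2
    · show ∑ i, c i * y.1 (σ i) = 1
      have := Equiv.sum_comp σ (fun i => c i * y.1 (σ i))
      simp only [Equiv.swap_apply_self, hσ] at this
      rw [← this]
      exact y.2
    · rintro ⟨y, hy⟩
      apply Subtype.ext
      funext i
      simp [hσ, Function.comp, Equiv.swap_apply_self]
    · rintro ⟨y, hy⟩
      apply Subtype.ext
      funext i
      simp [hσ, Function.comp, Equiv.swap_apply_self]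
  rw [key]
  apply count_fiber_unit0
  simpa [hσ, Equiv.swap_apply_left] using hj

end Aux

section ZModCount

variable (p k : ℕ)

theorem zmod_nonunit_sum_ne_one (hp : p.Prime) (hk : 1 ≤ k)
    (c y : Fin 4 → ZMod (p ^ k)) (hc : ∀ i, ¬ IsUnit (c i)) :
    ∑ i, c i * y i ≠ 1 := by
  haveI : Fact p.Prime := ⟨hp⟩
  haveI : NeZero (p ^ k) := ⟨pow_ne_zero k hp.pos.ne'⟩
  intro h
  have hdvd : p ∣ p ^ k := dvd_pow_self p (by omega)
  let φ := ZMod.castHom hdvd (ZMod p)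
  have hφc : ∀ i, φ (c i) = 0 := by
    intro i
    have h1 : ¬ (c i).val.Coprime (p ^ k) := by
      intro hco
      apply hc i
      have := (ZMod.isUnit_iff_coprime (c i).val (p ^ k)).2 hco
      rwa [ZMod.natCast_rightInverse (c i)] at this
    have h2 : p ∣ (c i).val := by
      by_contra h2
      exact h1 (Nat.Coprime.pow_right k (((hp.coprime_iff_not_dvd).2 h2).symm))
    have : φ (c i) = (((c i).val : ℕ) : ZMod p) := by
      conv_lhs => rw [← ZMod.natCast_rightInverse (c i)]
      rw [map_natCast]
    rw [this]
    exact (ZMod.natCast_eq_zero_iff _ _).2 h2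
  have := congrArg φ h
  rw [map_sum, map_one] at this
  simp only [map_mul, hφc, zero_mul, Finset.sum_const_zero] at this
  exact zero_ne_one this

theorem card_nonunits (hp : p.Prime) (hk : 1 ≤ k) :
    Nat.card {a : ZMod (p ^ k) // ¬ IsUnit a} = p ^ (k - 1) := by
  haveI : Fact p.Prime := ⟨hp⟩
  haveI : NeZero (p ^ k) := ⟨pow_ne_zero k hp.pos.ne'⟩
  classical
  rw [Nat.card_eq_fintype_card, Fintype.card_subtype_compl]
  have h1 : Fintype.card {a : ZMod (p ^ k) // IsUnit a} = Fintype.card (ZMod (p ^ k))ˣ :=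
    (Fintype.card_congr myUnitsEquiv).symm
  rw [h1, ZMod.card_units_eq_totient, Nat.totient_prime_pow hp (by omega), ZMod.card]
  have hk' : p ^ k = p ^ (k - 1) * p := by
    rw [← pow_succ]; congr 1; omega
  have hp2 : 2 ≤ p := hp.two_le
  have : p ^ (k - 1) * p = p ^ (k - 1) * (p - 1) + p ^ (k - 1) := by
    rw [← Nat.mul_succ]; congr 1; omega
  omega

end ZModCount

/-- for a prime `p` and `k ≥ 1`, the number of Zorn matrices of
determinant 1 over `ℤ/p^kℤ` is `p^{7k}(1 − p^{−4}) = p^{7k} − p^{7k−4}`. -/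
theorem card_SLL_zmod_prime_pow (p k : ℕ) (hp : p.Prime) (hk : 1 ≤ k) :
    Nat.card {A : Zorn (ZMod (p ^ k)) // A.det = 1} = p ^ (7 * k) - p ^ (7 * k - 4) := by
  haveI : Fact p.Prime := ⟨hp⟩
  haveI : NeZero (p ^ k) := ⟨pow_ne_zero k hp.pos.ne'⟩
  classical
  -- step 1: reduce to pairs of 4-vectors
  rw [Nat.card_congr zornEquivPairs,
      Nat.card_congr (Equiv.subtypeProdEquivSigmaSubtype
        (fun (x y : Fin 4 → ZMod (p ^ k)) => ∑ i, x i * y i = 1))]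
  rw [Nat.card_eq_fintype_card, Fintype.card_sigma]
  -- step 2: evaluate each fiber
  have hfiber : ∀ x : Fin 4 → ZMod (p ^ k),
      Fintype.card {y : Fin 4 → ZMod (p ^ k) // ∑ i, x i * y i = 1} =
        if ∃ j, IsUnit (x j) then (p ^ k) ^ 3 else 0 := by
    intro x
    rw [← Nat.card_eq_fintype_card]
    split_ifs with h
    · rw [count_fiber_unit x h, Nat.card_eq_fintype_card, Fintype.card_fun,
        ZMod.card, Fintype.card_fin]
    · push_neg at h
      haveI : IsEmpty {y : Fin 4 → ZMod (p ^ k) // ∑ i, x i * y i = 1} :=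
        ⟨fun y => zmod_nonunit_sum_ne_one p k hp hk x y.1 h y.2⟩
      exact Nat.card_of_isEmpty
  simp_rw [hfiber]
  rw [Finset.sum_ite, Finset.sum_const, Finset.sum_const_zero, add_zero, smul_eq_mul]
  have hneg : (Finset.univ.filter (fun x : Fin 4 → ZMod (p ^ k) => ¬ ∃ j, IsUnit (x j))).card =
      (p ^ (k - 1)) ^ 4 := by
    rw [← Fintype.card_subtype]
    have e : {x : Fin 4 → ZMod (p ^ k) // ¬ ∃ j, IsUnit (x j)} ≃ (Fin 4 → {a : ZMod (p ^ k) // ¬ IsUnit a}) :=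
      (Equiv.subtypeEquivRight (fun x => by push_neg; rfl)).trans Equiv.subtypePiEquivPi
    rw [Fintype.card_congr e, Fintype.card_fun, Fintype.card_fin,
      ← Nat.card_eq_fintype_card, card_nonunits p k hp hk]
  have hsplit := Finset.card_filter_add_card_filter_not
    (s := (Finset.univ : Finset (Fin 4 → ZMod (p ^ k)))) (p := fun x => ∃ j, IsUnit (x j))
  rw [hneg] at hsplit
  have huniv : (Finset.univ : Finset (Fin 4 → ZMod (p ^ k))).card = (p ^ k) ^ 4 := by
    rw [Finset.card_univ, Fintype.card_fun, ZMod.card, Fintype.card_fin]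
  rw [huniv] at hsplit
  have hpos : (Finset.univ.filter (fun x : Fin 4 → ZMod (p ^ k) => ∃ j, IsUnit (x j))).card =
      (p ^ k) ^ 4 - (p ^ (k - 1)) ^ 4 := Nat.eq_sub_of_add_eq hsplit
  rw [hpos, Nat.sub_mul]
  clear hfiber hneg hsplit huniv hpos
  have e1 : (p ^ k) ^ 4 * (p ^ k) ^ 3 = p ^ (7 * k) := by
    rw [← pow_mul, ← pow_mul, ← pow_add]; congr 1; ring
  have e2 : (p ^ (k - 1)) ^ 4 * (p ^ k) ^ 3 = p ^ (7 * k - 4) := by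
    rw [← pow_mul, ← pow_mul, ← pow_add]; congr 1; omega
  rw [e1, e2]
end

section
/- For every positive integer n, the number of solutions (a,b,u₁,u₂,u₃,v₁,v₂,v₃) in ℤ/nℤ of ab − (u₁v₁ + u₂v₂ + u₃v₃) = 1 equals n⁷·∏_{p | n} (1 − p⁻⁴), the product over primes p dividing n. -/
open scoped BigOperators

open Matrix

variable {ι R S : Type*} [Fintype ι] [CommRing R] [CommRing S]

def IsUnimodular (x : ι → R) : Prop := ∃ y, x ⬝ᵥ y = 1

variable (ι R) in
abbrev DotOnePairs : Type _ := {v : (ι → R) × (ι → R) // v.1 ⬝ᵥ v.2 = 1}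

namespace DotOnePairs

def congr (e : R ≃+* S) : DotOnePairs ι R ≃ DotOnePairs ι S :=
  let eι : (ι → R) ≃ (ι → S) := Equiv.piCongrRight fun _ => e.toEquiv
  Equiv.subtypeEquiv (eι.prodCongr eι) fun v => by
    rw [← e.map_eq_one_iff]
    exact Iff.of_eq (congrArg (· = 1) ((e : R →+* S).map_dotProduct v.1 v.2))

def prodEquiv : DotOnePairs ι (R × S) ≃ DotOnePairs ι R × DotOnePairs ι S :=
  let eι := Equiv.arrowProdEquivProdArrow ι (fun _ => R) (fun _ => S)
  (Equiv.subtypeEquiv ((eι.prodCongr eι).trans (Equiv.prodProdProdComm _ _ _ _)) fun v => by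
    rw [Prod.ext_iff]
    exact and_congr (Iff.of_eq (congrArg (· = 1) ((RingHom.fst R S).map_dotProduct v.1 v.2)))
      (Iff.of_eq (congrArg (· = 1) ((RingHom.snd R S).map_dotProduct v.1 v.2)))).trans
    Equiv.subtypeProdEquivProd

theorem card_prod : Nat.card (DotOnePairs ι (R × S)) =
    Nat.card (DotOnePairs ι R) * Nat.card (DotOnePairs ι S) := by
  rw [Nat.card_congr prodEquiv, Nat.card_prod]

end DotOnePairs

theorem AddMonoidHom.card_fiber_mul_card_of_surjective {G H : Type*} [AddGroup G] [AddGroup H]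
    {f : G →+ H} (hf : Function.Surjective f) (c : H) :
    Nat.card (f ⁻¹' {c}) * Nat.card H = Nat.card G := by
  rw [Nat.card_congr (f.fiberEquivKerOfSurjective hf c),
    ← Nat.card_congr (QuotientAddGroup.quotientKerEquivOfSurjective f hf).toEquiv, mul_comm,
    ← AddSubgroup.card_eq_card_quotient_mul_card_addSubgroup]

theorem IsUnimodular.card_fiber_mul_card [Finite R] {x : ι → R} (hx : IsUnimodular x) :
    Nat.card {y : ι → R // x ⬝ᵥ y = 1} * Nat.card R = Nat.card R ^ Fintype.card ι := by
  obtain ⟨y₀, hy₀⟩ := hx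
  let f : (ι → R) →+ R := AddMonoidHom.mk' (x ⬝ᵥ ·) (dotProduct_add x)
  have hf : Function.Surjective f := fun c => ⟨c • y₀, by simp [f, dotProduct_smul, hy₀]⟩
  rw [← Nat.card_eq_fintype_card, ← Nat.card_fun]
  exact f.card_fiber_mul_card_of_surjective hf 1

theorem card_dotOnePairs_mul_card [Finite R] :
    Nat.card (DotOnePairs ι R) * Nat.card R =
      Nat.card {x : ι → R // IsUnimodular x} * Nat.card R ^ Fintype.card ι := by
  classical
  have := Fintype.ofFinite R
  have fiber (x : ι → R) : Nat.card {y : ι → R // x ⬝ᵥ y = 1} * Nat.card R =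
      if IsUnimodular x then Nat.card R ^ Fintype.card ι else 0 := by
    split_ifs with hx
    · exact hx.card_fiber_mul_card
    · have : IsEmpty {y : ι → R // x ⬝ᵥ y = 1} := ⟨fun y => hx ⟨y, y.2⟩⟩
      simp
  rw [Nat.card_congr (Equiv.subtypeProdEquivSigmaSubtype fun x y : ι → R => x ⬝ᵥ y = 1),
    Nat.card_sigma, Finset.sum_mul, Finset.sum_congr rfl fun x _ => fiber x, Finset.sum_ite,
    Finset.sum_const_zero, add_zero, Finset.sum_const, smul_eq_mul,
    Nat.card_eq_fintype_card (α := Subtype _), Fintype.card_subtype]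

namespace IsLocalRing

variable [IsLocalRing R]

theorem isUnimodular_iff {x : ι → R} : IsUnimodular x ↔ ∃ i, IsUnit (x i) := by
  constructor
  · rintro ⟨y, hxy⟩
    obtain ⟨i, -, hi⟩ := exists_of_isUnit_sum (hxy ▸ isUnit_one : IsUnit (x ⬝ᵥ y))
    exact ⟨i, isUnit_of_mul_isUnit_left hi⟩
  · classical
    rintro ⟨i, u, hu⟩
    exact ⟨Pi.single i ↑u⁻¹, by rw [dotProduct_single, ← hu, Units.mul_inv]⟩

theorem card_isUnimodular_add_card_nonunits_pow [Finite R] :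
    Nat.card {x : ι → R // IsUnimodular x} + Nat.card (nonunits R) ^ Fintype.card ι =
      Nat.card R ^ Fintype.card ι := by
  classical
  have nonunimodular : {x : ι → R // ¬IsUnimodular x} ≃ (ι → nonunits R) :=
    (Equiv.subtypeEquivRight fun x => by simp [isUnimodular_iff, mem_nonunits_iff]).trans
      (Equiv.subtypePiEquivPi (p := fun _ r => r ∈ nonunits R))
  rw [← Nat.card_eq_fintype_card, ← Nat.card_fun, ← Nat.card_fun,
    ← Nat.card_congr nonunimodular, ← Nat.card_sum, Nat.card_congr (Equiv.sumCompl _)]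

end IsLocalRing

theorem Nat.card_units_add_card_nonunits (M : Type*) [Monoid M] [Finite M] :
    Nat.card Mˣ + Nat.card (nonunits M) = Nat.card M := by
  classical
  rw [Nat.card_congr (Equiv.ofInjective _ Units.val_injective), ← Nat.card_sum]
  exact Nat.card_congr (Equiv.Set.sumCompl _)

namespace ZMod

variable {p k : ℕ}

theorem natCast_mem_nonunits_prime_pow_iff (hp : p.Prime) (hk : k ≠ 0) (m : ℕ) :
    (m : ZMod (p ^ k)) ∈ nonunits _ ↔ p ∣ m := by
  rw [mem_nonunits_iff, isUnit_natCast_iff_not_dvd_pow hp (Nat.pos_of_ne_zero hk), not_not]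

theorem isLocalRing_prime_pow (hp : p.Prime) (hk : k ≠ 0) : IsLocalRing (ZMod (p ^ k)) := by
  have : NeZero (p ^ k) := ⟨pow_ne_zero _ hp.ne_zero⟩
  have : Nontrivial (ZMod (p ^ k)) := nontrivial_iff.mpr (Nat.one_lt_pow hk hp.one_lt).ne'
  refine IsLocalRing.of_nonunits_add fun a b ha hb => ?_
  obtain ⟨m, rfl⟩ := natCast_zmod_surjective a
  obtain ⟨n, rfl⟩ := natCast_zmod_surjective b
  rw [← Nat.cast_add, natCast_mem_nonunits_prime_pow_iff hp hk] at *
  exact dvd_add ha hb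

theorem card_nonunits_prime_pow (hp : p.Prime) (hk : k ≠ 0) :
    Nat.card (nonunits (ZMod (p ^ k))) = p ^ (k - 1) := by
  have : NeZero (p ^ k) := ⟨pow_ne_zero _ hp.ne_zero⟩
  have h := Nat.card_units_add_card_nonunits (ZMod (p ^ k))
  rw [Nat.card_eq_fintype_card (α := (ZMod _)ˣ), card_units_eq_totient,
    Nat.totient_prime_pow hp (Nat.pos_of_ne_zero hk), Nat.card_zmod] at h
  obtain ⟨j, rfl⟩ := Nat.exists_eq_succ_of_ne_zero hk
  obtain ⟨q, rfl⟩ := Nat.exists_eq_succ_of_ne_zero hp.ne_zero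
  rw [Nat.succ_sub_one, Nat.succ_sub_one, pow_succ, Nat.mul_succ] at *
  omega

end ZMod

theorem card_dotOnePairs_zmod_prime_pow_mul {p k : ℕ} (hp : p.Prime) (hk : k ≠ 0) :
    Nat.card (DotOnePairs ι (ZMod (p ^ k))) * (p : ℚ) ^ k =
      ((p : ℚ) ^ k) ^ (2 * Fintype.card ι) * (1 - ((p : ℚ)⁻¹) ^ Fintype.card ι) := by
  have : NeZero (p ^ k) := ⟨pow_ne_zero _ hp.ne_zero⟩
  have := ZMod.isLocalRing_prime_pow hp hk
  have hpairs := card_dotOnePairs_mul_card (ι := ι) (R := ZMod (p ^ k))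
  have hunimodular :=
    IsLocalRing.card_isUnimodular_add_card_nonunits_pow (ι := ι) (R := ZMod (p ^ k))
  have hnonunits : Nat.card (nonunits (ZMod (p ^ k))) * p = p ^ k := by
    rw [ZMod.card_nonunits_prime_pow hp hk, ← pow_succ,
      Nat.sub_add_cancel (Nat.pos_of_ne_zero hk)]
  rw [Nat.card_zmod] at hpairs hunimodular
  have hp0 : (p : ℚ) ≠ 0 := by exact_mod_cast hp.ne_zero
  replace hpairs := congrArg (Nat.cast : ℕ → ℚ) hpairs
  replace hunimodular : (Nat.card {x : ι → ZMod (p ^ k) // IsUnimodular x} : ℚ) =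
      ((p : ℚ) ^ k) ^ Fintype.card ι -
        (Nat.card (nonunits (ZMod (p ^ k))) : ℚ) ^ Fintype.card ι := by
    rw [eq_sub_iff_add_eq]; exact_mod_cast hunimodular
  replace hnonunits : (Nat.card (nonunits (ZMod (p ^ k))) : ℚ) = p ^ k * (p : ℚ)⁻¹ := by
    rw [eq_mul_inv_iff_mul_eq₀ hp0]; exact_mod_cast hnonunits
  push_cast at hpairs hunimodular
  rw [hpairs, hunimodular, hnonunits, mul_pow]
  ring

theorem card_dotOnePairs_zmod_mul {n : ℕ} (hn : n ≠ 0) :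
    (Nat.card (DotOnePairs ι (ZMod n)) * n : ℚ) =
      (n : ℚ) ^ (2 * Fintype.card ι) *
        ∏ p ∈ n.primeFactors, (1 - ((p : ℚ)⁻¹) ^ Fintype.card ι) := by
  induction n using Nat.recOnPosPrimePosCoprime with
  | prime_pow p k hp hk =>
    rw [Nat.primeFactors_prime_pow hk.ne' hp, Finset.prod_singleton]
    push_cast
    exact card_dotOnePairs_zmod_prime_pow_mul hp hk.ne'
  | zero => exact absurd rfl hn
  | one =>
    have : Unique (DotOnePairs ι (ZMod 1)) :=
      ⟨⟨⟨(0, 0), Subsingleton.elim _ _⟩⟩, fun _ => Subsingleton.elim _ _⟩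
    simp
  | coprime a b _ _ hab iha ihb =>
    rw [Nat.card_congr (DotOnePairs.congr (ZMod.chineseRemainder hab)), DotOnePairs.card_prod,
      hab.primeFactors_mul, Finset.prod_union hab.disjoint_primeFactors]
    push_cast
    linear_combination (Nat.card (DotOnePairs ι (ZMod b)) * b : ℚ) * iha (by positivity) +
      ((a : ℚ) ^ (2 * Fintype.card ι) *
        ∏ p ∈ a.primeFactors, (1 - ((p : ℚ)⁻¹) ^ Fintype.card ι)) * ihb (by positivity)

namespace Zorn

theorem dot_eq_dotProduct (u v : Fin 3 → R) : dot u v = u ⬝ᵥ v := by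
  simp [dot, dotProduct, Fin.sum_univ_three]

def toDotPairs : Zorn R ≃ (Fin 4 → R) × (Fin 4 → R) where
  toFun A := (vecCons A.a A.x, vecCons A.b (-A.y))
  invFun v := ⟨vecHead v.1, vecTail v.1, -vecTail v.2, vecHead v.2⟩
  left_inv A := by simp
  right_inv v := by simp

theorem det_eq_dotProduct (A : Zorn R) : A.det = (toDotPairs A).1 ⬝ᵥ (toDotPairs A).2 := by
  simp [det, dot_eq_dotProduct, toDotPairs, sub_eq_add_neg]

def detOneEquiv : {A : Zorn R // A.det = 1} ≃ DotOnePairs (Fin 4) R :=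
  toDotPairs.subtypeEquiv fun A => by rw [det_eq_dotProduct]

theorem infinite_detOne [Infinite R] : Infinite {A : Zorn R // A.det = 1} :=
  Infinite.of_injective (fun r : R => ⟨⟨1, fun _ => r, 0, 1⟩, by simp [det, dot]⟩)
    fun r s h => congrFun (congrArg (Zorn.x ∘ Subtype.val) h) 0

end Zorn

theorem card_SLL_zmod_general (n : ℕ) :
    (Nat.card {A : Zorn (ZMod n) // A.det = 1} : ℚ) =
      (n : ℚ) ^ 7 * ∏ p ∈ n.primeFactors, (1 - ((p : ℚ)⁻¹) ^ 4) := by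
  rcases eq_or_ne n 0 with rfl | hn
  -- `ZMod 0 = ℤ`: there are infinitely many solutions, and `Nat.card` of an infinite type is `0`.
  · have := Zorn.infinite_detOne (R := ZMod 0)
    simp [Nat.card_eq_zero_of_infinite]
  have h := card_dotOnePairs_zmod_mul (ι := Fin 4) hn
  rw [Fintype.card_fin, ← Nat.card_congr Zorn.detOneEquiv] at h
  have hn' : (n : ℚ) ≠ 0 := by exact_mod_cast hn
  rw [← mul_left_inj' hn', h]
  ring

/-- for `n ≥ 1`, the number of Zorn matrices of determinant 1
over `ℤ/nℤ` is `n⁷·∏_{p ∣ n} (1 − p⁻⁴)`. -/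
theorem card_SLL_zmod (n : ℕ) (hn : 0 < n) :
    (Nat.card {A : Zorn (ZMod n) // A.det = 1} : ℚ) =
      (n : ℚ) ^ 7 * ∏ p ∈ n.primeFactors, (1 - ((p : ℚ)⁻¹) ^ 4) :=
  card_SLL_zmod_general n
end

section
/- Reduction modulo n gives a multiplication-preserving surjection from SLL(2,ℤ) onto SLL(2,ℤ/nℤ), whose kernel (the preimage of the identity) is exactly the principal congruence subloop Γ(n) = {A ∈ SLL(2,ℤ) : A ≡ I mod n componentwise}. -/
/-- Componentwise reduction modulo `n` of an integral Zorn matrix. -/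
def Zorn.redMod (n : ℕ) (A : Zorn ℤ) : Zorn (ZMod n) :=
  ⟨(A.a : ZMod n), fun i => ((A.x i : ℤ) : ZMod n),
    fun i => ((A.y i : ℤ) : ZMod n), (A.b : ZMod n)⟩

attribute [ext] Zorn

theorem Int.exists_isCoprime_add_mul {c d N : ℤ} (hd : d ≠ 0)
    (h : ∀ p : ℤ, Prime p → p ∣ c → p ∣ d → ¬ p ∣ N) :
    ∃ t, IsCoprime (c + N * t) d := by
  classical
  -- Each prime of `d` then divides exactly one of `c` and `N * t`.
  let S : Finset ℕ := {p ∈ d.natAbs.primeFactors | ¬ (p : ℤ) ∣ c}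
  refine ⟨∏ p ∈ S, (p : ℤ), isCoprime_of_prime_dvd (by simp [hd]) fun z hz hzc hzd ↦ ?_⟩
  have hz' : z.natAbs.Prime := Int.prime_iff_natAbs_prime.mp hz
  by_cases hc : z ∣ c
  · have hzt : z ∣ ∏ p ∈ S, (p : ℤ) :=
      (hz.dvd_or_dvd ((dvd_add_right hc).mp hzc)).resolve_left (h z hz hc hzd)
    obtain ⟨p, hp, hzp⟩ := (hz.dvd_finsetProd_iff _).mp hzt
    simp only [S, Finset.mem_filter, Nat.mem_primeFactors] at hp
    have hzp' : z.natAbs = p :=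
      (Nat.prime_dvd_prime_iff_eq hz' hp.1.1).mp (Int.natAbs_dvd_natAbs.mpr hzp)
    exact hp.2 (hzp' ▸ Int.natAbs_dvd.mpr hc)
  · have hzS : z.natAbs ∈ S := by
      simp only [S, Finset.mem_filter, Nat.mem_primeFactors, Int.natAbs_dvd]
      exact ⟨⟨hz', Int.natAbs_dvd_natAbs.mpr hzd, by simpa using hd⟩, hc⟩
    have hzt : z ∣ ∏ p ∈ S, (p : ℤ) := Int.natAbs_dvd.mp (Finset.dvd_prod_of_mem _ hzS)
    exact hc ((dvd_add_left (hzt.mul_left N)).mp hzc)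

namespace Zorn

section map

variable {R S : Type*} [CommRing R] [CommRing S] (f : R →+* S)

def map (A : Zorn R) : Zorn S := ⟨f A.a, f ∘ A.x, f ∘ A.y, f A.b⟩

lemma map_dot (u v : Fin 3 → R) : f (dot u v) = dot (f ∘ u) (f ∘ v) := by
  simp [dot]

lemma map_cross (u v : Fin 3 → R) : f ∘ cross u v = cross (f ∘ u) (f ∘ v) := by
  ext i; fin_cases i <;> simp [cross]

lemma map_mul (A B : Zorn R) : (A.mul B).map f = (A.map f).mul (B.map f) := by
  ext i <;> simp [map, mul, map_dot, ← map_cross]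

lemma det_map (A : Zorn R) : (A.map f).det = f A.det := by
  simp [map, det, map_dot]

end map

lemma redMod_eq_map (n : ℕ) (A : Zorn ℤ) : redMod n A = A.map (Int.castRingHom (ZMod n)) := rfl

lemma redMod_eq_one_iff (n : ℕ) (A : Zorn ℤ) :
    redMod n A = one ↔ ((n : ℤ) ∣ A.a - 1 ∧ (∀ i, (n : ℤ) ∣ A.x i) ∧
      (∀ i, (n : ℤ) ∣ A.y i) ∧ (n : ℤ) ∣ A.b - 1) := by
  simp only [Zorn.ext_iff, redMod, one, funext_iff, Pi.zero_apply,
    ← ZMod.intCast_zmod_eq_zero_iff_dvd, Int.cast_sub, Int.cast_one, sub_eq_zero]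

lemma dvd_det_sub_one_iff (n : ℕ) (A : Zorn ℤ) : (n : ℤ) ∣ A.det - 1 ↔ (redMod n A).det = 1 := by
  rw [← ZMod.intCast_zmod_eq_zero_iff_dvd, redMod_eq_map, det_map, Int.cast_sub, Int.cast_one,
    sub_eq_zero, eq_intCast]

def IsUnimodular {R : Type*} [CommRing R] (a : R) (x : Fin 3 → R) : Prop :=
  ∃ p q, p * a + dot x q = 1

lemma det_mk_add_smul_sub_mul {R : Type*} [CommRing R] (A : Zorn R) {p : R} {q : Fin 3 → R}
    (h : p * A.a + dot A.x q = 1) :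
    (⟨A.a, A.x, A.y + (A.det - 1) • q, A.b - (A.det - 1) * p⟩ : Zorn R).det = 1 := by
  have hdet : A.det = A.a * A.b - dot A.x A.y := rfl
  show A.a * (A.b - (A.det - 1) * p) - dot A.x (A.y + (A.det - 1) • q) = 1
  simp only [dot, Pi.add_apply, Pi.smul_apply, smul_eq_mul] at h hdet ⊢
  linear_combination (1 - A.det) * h - hdet

lemma exists_isUnimodular_add_mul {n a : ℤ} {x : Fin 3 → ℤ} (hn : n ≠ 0)
    (h : ∃ p q k, p * a + dot x q + n * k = 1) :
    ∃ t s, IsUnimodular a ![x 0 + n * t, x 1, x 2 + n * s] := by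
  obtain ⟨p, q, k, hpqk⟩ := h
  obtain ⟨s, hs⟩ : ∃ s, x 2 + n * s ≠ 0 := by
    by_cases h0 : x 2 = 0
    · exact ⟨1, by simpa [h0]⟩
    · exact ⟨0, by simpa⟩
  set d := gcd a (gcd (x 1) (x 2 + n * s))
  have hd : d ≠ 0 := by simp [d, gcd_eq_zero_iff, hs]
  have hprime : ∀ r : ℤ, Prime r → r ∣ x 0 → r ∣ d → ¬ r ∣ n := by
    intro r hr hr0 hrd hrn
    have hra : r ∣ a := hrd.trans (gcd_dvd_left _ _)
    have hr1 : r ∣ x 1 := hrd.trans ((gcd_dvd_right _ _).trans (gcd_dvd_left _ _))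
    have hr2 : r ∣ x 2 := by
      have := hrd.trans ((gcd_dvd_right _ _).trans (gcd_dvd_right _ _))
      exact (dvd_add_left (hrn.mul_right s)).mp this
    refine hr.not_dvd_one (hpqk ▸ ?_)
    simp only [dot]
    exact ((hra.mul_left p).add (((hr0.mul_right _).add (hr1.mul_right _)).add
      (hr2.mul_right _))).add (hrn.mul_right k)
  obtain ⟨t, e, f, hef⟩ := Int.exists_isCoprime_add_mul hd hprime
  obtain ⟨u, v, huv⟩ := exists_gcd_eq_mul_add_mul a (gcd (x 1) (x 2 + n * s))
  obtain ⟨u', v', huv'⟩ := exists_gcd_eq_mul_add_mul (x 1) (x 2 + n * s)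
  refine ⟨t, s, f * u, ![e, f * v * u', f * v * v'], ?_⟩
  simp only [dot, Matrix.cons_val_zero, Matrix.cons_val_one, Matrix.cons_val_two,
    Matrix.head_cons, Matrix.tail_cons]
  linear_combination hef - f * huv - f * v * huv'

lemma exists_det_eq_one_redMod_eq_of_isUnimodular {n : ℕ} (A : Zorn ℤ)
    (hA : IsUnimodular A.a A.x) (hdet : (redMod n A).det = 1) :
    ∃ A' : Zorn ℤ, A'.det = 1 ∧ redMod n A' = redMod n A := by
  obtain ⟨p, q, hpq⟩ := hA
  obtain ⟨k, hk⟩ := (dvd_det_sub_one_iff n A).mpr hdet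
  refine ⟨_, det_mk_add_smul_sub_mul A hpq, ?_⟩
  ext <;> simp [redMod, hk]

lemma exists_isUnimodular_redMod_eq {n : ℕ} (hn : n ≠ 0) (B : Zorn (ZMod n)) (hB : B.det = 1) :
    ∃ A : Zorn ℤ, IsUnimodular A.a A.x ∧ redMod n A = B := by
  let A₀ : Zorn ℤ := ⟨B.a.cast, fun i => (B.x i).cast, fun i => (B.y i).cast, B.b.cast⟩
  have hA₀ : redMod n A₀ = B := by ext <;> simp [A₀, redMod]
  obtain ⟨k, hk⟩ := (dvd_det_sub_one_iff n A₀).mpr (hA₀ ▸ hB)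
  obtain ⟨t, s, hu⟩ := exists_isUnimodular_add_mul (n := n) (a := A₀.a) (x := A₀.x)
    (Int.natCast_ne_zero.mpr hn)
    ⟨A₀.b, -A₀.y, -k, by simp only [det, dot, Pi.neg_apply] at hk ⊢; linear_combination hk⟩
  refine ⟨⟨A₀.a, ![A₀.x 0 + n * t, A₀.x 1, A₀.x 2 + n * s], A₀.y, A₀.b⟩, hu, ?_⟩
  rw [← hA₀]
  ext i <;> (try fin_cases i) <;> simp [redMod]

lemma exists_det_eq_one_redMod_eq {n : ℕ} (hn : n ≠ 0) (B : Zorn (ZMod n)) (hB : B.det = 1) :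
    ∃ A : Zorn ℤ, A.det = 1 ∧ redMod n A = B := by
  obtain ⟨A, hA, rfl⟩ := exists_isUnimodular_redMod_eq hn B hB
  exact exists_det_eq_one_redMod_eq_of_isUnimodular A hA hB

end Zorn

/-- reduction mod `n` is a multiplication-preserving surjection
from `SLL(2,ℤ)` onto `SLL(2,ℤ/nℤ)`, whose kernel is exactly the principal
congruence subloop `Γ(n) = {A : A ≡ I mod n}`. -/
theorem redMod_hom_surjective_kernel (n : ℕ) (hn : 0 < n) :
    (∀ A B : Zorn ℤ, Zorn.redMod n (A.mul B) = (Zorn.redMod n A).mul (Zorn.redMod n B)) ∧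
    (∀ B : Zorn (ZMod n), B.det = 1 → ∃ A : Zorn ℤ, A.det = 1 ∧ Zorn.redMod n A = B) ∧
    (∀ A : Zorn ℤ, A.det = 1 →
      (Zorn.redMod n A = Zorn.one ↔
        ((n : ℤ) ∣ A.a - 1 ∧ (∀ i, (n : ℤ) ∣ A.x i) ∧
          (∀ i, (n : ℤ) ∣ A.y i) ∧ (n : ℤ) ∣ A.b - 1))) :=
  ⟨Zorn.map_mul (Int.castRingHom (ZMod n)), Zorn.exists_det_eq_one_redMod_eq hn.ne',
    fun A _ => Zorn.redMod_eq_one_iff n A⟩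
end
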